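/- arXiv:2012.14199 — 3 statements merged into one kernel-verified Lean document; each statement's English description precedes it below -/
import Mathlib

section
/- If a Petri net system ⟨N, m₀⟩ is live and bounded, then N is consistent, i.e., there exists a T-semiflow x with x[t] > 0 for all transitions t. -/
variable {P T : Type*}

/-- Transition `t` is enabled at marking `m`. -/
def Enabled (Pre : P → T → ℕ) (m : P → ℕ) (t : T) : Prop := ∀ p, Pre p t ≤ m p

/-- Firing of transition `t` at marking `m`. -/
def Fire (Pre Post : P → T → ℕ) (m : P → ℕ) (t : T) : P → ℕ :=
  fun p => m p + Post p t - Pre p t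

/-- `FireSeq Pre Post m σ m'` : the firing sequence `σ` leads from `m` to `m'`. -/
inductive FireSeq (Pre Post : P → T → ℕ) : (P → ℕ) → List T → (P → ℕ) → Prop
  | nil (m : P → ℕ) : FireSeq Pre Post m [] m
  | cons {m mf : P → ℕ} {t : T} {σ : List T} :
      Enabled Pre m t → FireSeq Pre Post (Fire Pre Post m t) σ mf →
      FireSeq Pre Post m (t :: σ) mf

/-- `m` is reachable from `m₀`. -/
def Reachable (Pre Post : P → T → ℕ) (m₀ m : P → ℕ) : Prop :=
  ∃ σ : List T, FireSeq Pre Post m₀ σ m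

lemma fireSeq_append {Pre Post : P → T → ℕ} {m m' m'' : P → ℕ} {σ σ' : List T}
    (h : FireSeq Pre Post m σ m') (h' : FireSeq Pre Post m' σ' m'') :
    FireSeq Pre Post m (σ ++ σ') m'' := by
  induction h with
  | nil => simpa
  | cons he _ ih => exact .cons he (ih h')

lemma state_eq {Pre Post : P → T → ℕ} {m m' : P → ℕ} {σ : List T}
    (h : FireSeq Pre Post m σ m') (p : P) :
    (m' p : ℤ) = m p + (σ.map (fun t => (Post p t : ℤ) - Pre p t)).sum := by
  induction h with
  | nil => simp
  | @cons m mf t σ he _ ih =>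
    have hp := he p
    simp only [List.map_cons, List.sum_cons]
    rw [ih]
    have : (Fire Pre Post m t p : ℤ) = m p + Post p t - Pre p t := by
      simp [Fire]; omega
    rw [this]; ring

lemma sum_map_count [Fintype T] [DecidableEq T] (f : T → ℤ) (σ : List T) :
    (σ.map f).sum = ∑ t, (σ.count t : ℤ) * f t := by
  induction σ with
  | nil => simp
  | cons a σ ih =>
    simp only [List.map_cons, List.sum_cons, List.count_cons, ih]
    push_cast
    rw [Finset.sum_congr rfl (fun t _ => add_mul (σ.count t : ℤ) _ (f t)),
      Finset.sum_add_distrib]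
    simp [add_comm]

/-- A live and bounded net system is consistent. -/
theorem live_bounded_consistent [Fintype P] [Fintype T]
    (Pre Post : P → T → ℕ) (m₀ : P → ℕ)
    (hlive : ∀ m, Reachable Pre Post m₀ m → ∀ t : T,
      ∃ m', Reachable Pre Post m m' ∧ Enabled Pre m' t)
    (hbounded : {m | Reachable Pre Post m₀ m}.Finite) :
    ∃ x : T → ℕ, (∀ t, 0 < x t) ∧
      ∀ p, ∑ t, ((Post p t : ℤ) - (Pre p t : ℤ)) * (x t : ℤ) = 0 := by
  classical
  -- Step A: from any reachable marking, there is a firing sequence covering all transitions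
  have hA : ∀ m, Reachable Pre Post m₀ m →
      ∃ m', Reachable Pre Post m₀ m' ∧ ∃ σ, FireSeq Pre Post m σ m' ∧ ∀ t : T, t ∈ σ := by
    have key : ∀ (ts : List T) (m), Reachable Pre Post m₀ m →
        ∃ m', Reachable Pre Post m₀ m' ∧ ∃ σ, FireSeq Pre Post m σ m' ∧ ∀ t ∈ ts, t ∈ σ := by
      intro ts
      induction ts with
      | nil => intro m hm; exact ⟨m, hm, [], .nil m, by simp⟩
      | cons t ts ih =>
        intro m hm
        obtain ⟨m', ⟨σ₁, hσ₁⟩, hen⟩ := hlive m hm t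
        have hm' : Reachable Pre Post m₀ m' := by
          obtain ⟨σ₀, hσ₀⟩ := hm; exact ⟨σ₀ ++ σ₁, fireSeq_append hσ₀ hσ₁⟩
        have hfire : FireSeq Pre Post m' [t] (Fire Pre Post m' t) :=
          .cons hen (.nil _)
        have hm'' : Reachable Pre Post m₀ (Fire Pre Post m' t) := by
          obtain ⟨σ₀, hσ₀⟩ := hm'; exact ⟨σ₀ ++ [t], fireSeq_append hσ₀ hfire⟩
        obtain ⟨mf, hmf, σ₂, hσ₂, hmem⟩ := ih _ hm''
        refine ⟨mf, hmf, σ₁ ++ [t] ++ σ₂,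
          fireSeq_append (fireSeq_append hσ₁ hfire) hσ₂, ?_⟩
        intro s hs
        rcases List.mem_cons.mp hs with hs | hs
        · subst hs; simp
        · simp [hmem s hs]

    intro m hm
    obtain ⟨m', hm', σ, hσ, hmem⟩ := key (Finset.univ.toList) m hm
    exact ⟨m', hm', σ, hσ, fun t => hmem t (by simp)⟩
  choose nxt hreach σf hσf hmemf using hA
  -- the infinite sequence of markings
  let g : ℕ → {m // Reachable Pre Post m₀ m} := fun n =>
    Nat.rec ⟨m₀, [], .nil m₀⟩ (fun _ prev => ⟨nxt prev.1 prev.2, hreach prev.1 prev.2⟩) n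
  have hstep : ∀ i j, i < j → ∃ σ : List T,
      FireSeq Pre Post (g i).1 σ (g j).1 ∧ ∀ t : T, t ∈ σ := by
    intro i j hij
    induction j, hij using Nat.le_induction with
    | base => exact ⟨σf (g i).1 (g i).2, hσf _ _, hmemf _ _⟩
    | succ j hij ih =>
      obtain ⟨σ, hσ, hmem⟩ := ih
      exact ⟨σ ++ σf (g j).1 (g j).2, fireSeq_append hσ (hσf _ _),
        fun t => by simp [hmem t]⟩
  -- pigeonhole
  haveI : Finite {m // Reachable Pre Post m₀ m} := hbounded.to_subtype
  obtain ⟨i, j, hne, heq⟩ := Finite.exists_ne_map_eq_of_infinite g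
  wlog hij : i < j generalizing i j
  · exact this j i hne.symm heq.symm (by omega)
  obtain ⟨σ, hσ, hmem⟩ := hstep i j hij
  refine ⟨fun t => σ.count t, fun t => List.count_pos_iff.mpr (hmem t), fun p => ?_⟩
  have hst := state_eq hσ p
  rw [heq] at hst
  have := sum_map_count (fun t => (Post p t : ℤ) - Pre p t) σ
  rw [this] at hst
  have h0 : ∑ t, (σ.count t : ℤ) * ((Post p t : ℤ) - Pre p t) = 0 := by
    omega
  calc ∑ t, ((Post p t : ℤ) - (Pre p t : ℤ)) * (σ.count t : ℤ)
      = ∑ t, (σ.count t : ℤ) * ((Post p t : ℤ) - Pre p t) := by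
        exact Finset.sum_congr rfl fun t _ => mul_comm _ _
    _ = 0 := h0
end

section
/- If p is an implicit place of a Petri net system Σ = ⟨P ∪ {p}, T, Pre, Post, m₀⟩, then the projection map m ↦ m|_P is a bijection between the firing sequences of Σ from m₀ and the firing sequences of the reduced system (with p removed) from m₀|_P; in particular every firing sequence of the reduced system is also fireable in Σ. -/
variable {P T : Type*}

private theorem fs_proj (Pre Post : Option P → T → ℕ) :
    ∀ (σ : List T) (m m' : Option P → ℕ), FireSeq Pre Post m σ m' →
      FireSeq (fun (q : P) t => Pre (some q) t) (fun (q : P) t => Post (some q) t)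
        (fun q => m (some q)) σ (fun q => m' (some q)) := by
  intro σ
  induction σ with
  | nil => intro m m' h; cases h; exact FireSeq.nil _
  | cons t σ ih =>
    intro m m' h
    cases h with
    | cons he hs =>
      refine FireSeq.cons (fun q => he (some q)) ?_
      have := ih _ _ hs
      convert this using 2
      rfl

private theorem fs_snoc (Pre Post : P → T → ℕ) :
    ∀ (σ : List T) (m m' : P → ℕ) (t : T), FireSeq Pre Post m σ m' → Enabled Pre m' t →
      FireSeq Pre Post m (σ ++ [t]) (Fire Pre Post m' t) := by
  intro σ
  induction σ with
  | nil => intro m m' t h he; cases h; exact FireSeq.cons he (FireSeq.nil _)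
  | cons t' σ ih =>
    intro m m' t h he
    cases h with
    | cons he' hs => exact FireSeq.cons he' (ih _ _ _ hs he)

private theorem fs_lift (Pre Post : Option P → T → ℕ) (m₀ : Option P → ℕ)
    (himp : ∀ m, Reachable Pre Post m₀ m → ∀ t, 0 < Pre none t →
      (∀ q : P, Pre (some q) t ≤ m (some q)) → Pre none t ≤ m none) :
    ∀ (σ : List T) (m : Option P → ℕ) (m' : P → ℕ), Reachable Pre Post m₀ m →
      FireSeq (fun (q : P) t => Pre (some q) t) (fun (q : P) t => Post (some q) t)
        (fun q => m (some q)) σ m' → ∃ mf, FireSeq Pre Post m σ mf := by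
  intro σ
  induction σ with
  | nil => intro m m' _ _; exact ⟨m, FireSeq.nil m⟩
  | cons t σ ih =>
    intro m m' hreach h
    cases h with
    | cons he hs =>
      have hen : Enabled Pre m t := by
        intro p
        cases p with
        | some q => exact he q
        | none =>
          rcases Nat.eq_zero_or_pos (Pre none t) with h0 | hpos
          · omega
          · exact himp m hreach t hpos he
      have hfe : (fun q : P => Fire Pre Post m t (some q)) =
          Fire (fun (q : P) t => Pre (some q) t) (fun (q : P) t => Post (some q) t)
            (fun q => m (some q)) t := rfl
      have hreach' : Reachable Pre Post m₀ (Fire Pre Post m t) := by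
        obtain ⟨τ, hτ⟩ := hreach
        exact ⟨τ ++ [t], fs_snoc Pre Post τ m₀ m t hτ hen⟩
      obtain ⟨mf, hmf⟩ := ih (Fire Pre Post m t) m' hreach' (hfe ▸ hs)
      exact ⟨mf, FireSeq.cons hen hmf⟩

/-- Projection gives a bijection between the firing sequences of a system with an
implicit place `none` and those of the reduced system on places `P`. -/
theorem implicit_place_sequences (Pre Post : Option P → T → ℕ) (m₀ : Option P → ℕ)
    (himp : ∀ m, Reachable Pre Post m₀ m → ∀ t, 0 < Pre none t →
      (∀ q : P, Pre (some q) t ≤ m (some q)) → Pre none t ≤ m none) :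
    (∀ (σ : List T) (m : Option P → ℕ), FireSeq Pre Post m₀ σ m →
      FireSeq (fun (q : P) t => Pre (some q) t) (fun (q : P) t => Post (some q) t)
        (fun q => m₀ (some q)) σ (fun q => m (some q))) ∧
    (∀ σ : List T, (∃ m, FireSeq Pre Post m₀ σ m) ↔
      (∃ m', FireSeq (fun (q : P) t => Pre (some q) t) (fun (q : P) t => Post (some q) t)
        (fun q => m₀ (some q)) σ m')) := by
  constructor
  · intro σ m h
    exact fs_proj Pre Post σ m₀ m h
  · intro σ
    constructor
    · rintro ⟨m, h⟩
      exact ⟨_, fs_proj Pre Post σ m₀ m h⟩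
    · rintro ⟨m', h⟩
      exact fs_lift Pre Post m₀ himp σ m₀ m' ⟨[], FireSeq.nil m₀⟩ h
end

section
/- Let N be a Petri net whose reduced version N' is obtained by removing an implicit place p. Then ⟨N, m₀⟩ is live if and only if ⟨N', m₀|_P⟩ is live. -/
variable {P T : Type*}

lemma FireSeq.trans {Pre Post : P → T → ℕ} {m₀ m m' : P → ℕ} {σ σ' : List T}
    (h : FireSeq Pre Post m₀ σ m) (h' : FireSeq Pre Post m σ' m') :
    FireSeq Pre Post m₀ (σ ++ σ') m' := by
  induction h with
  | nil => simpa
  | cons he _ ih => exact .cons he (ih h')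

lemma Reachable.trans {Pre Post : P → T → ℕ} {m₀ m m' : P → ℕ}
    (h : Reachable Pre Post m₀ m) (h' : Reachable Pre Post m m') :
    Reachable Pre Post m₀ m' := by
  obtain ⟨σ, hσ⟩ := h; obtain ⟨τ, hτ⟩ := h'
  exact ⟨σ ++ τ, hσ.trans hτ⟩

lemma fire_proj (Pre Post : Option P → T → ℕ) (m : Option P → ℕ) (t : T) :
    (fun q : P => Fire Pre Post m t (some q)) =
      Fire (fun (q : P) t => Pre (some q) t) (fun (q : P) t => Post (some q) t)
        (fun q => m (some q)) t := rfl

lemma proj_seq (Pre Post : Option P → T → ℕ) {m m' : Option P → ℕ} {σ : List T}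
    (h : FireSeq Pre Post m σ m') :
    FireSeq (fun (q : P) t => Pre (some q) t) (fun (q : P) t => Post (some q) t)
      (fun q => m (some q)) σ (fun q => m' (some q)) := by
  induction h with
  | nil => exact .nil _
  | cons he _ ih => exact .cons (fun q => he (some q)) (by rw [← fire_proj]; exact ih)

lemma lift_seq (Pre Post : Option P → T → ℕ) (m₀ : Option P → ℕ)
    (himp : ∀ m, Reachable Pre Post m₀ m → ∀ t, 0 < Pre none t →
      (∀ q : P, Pre (some q) t ≤ m (some q)) → Pre none t ≤ m none)
    {m : Option P → ℕ} (hm : Reachable Pre Post m₀ m) {σ : List T} {mf : P → ℕ}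
    (h : FireSeq (fun (q : P) t => Pre (some q) t) (fun (q : P) t => Post (some q) t)
      (fun q => m (some q)) σ mf) :
    ∃ m', FireSeq Pre Post m σ m' ∧ (fun q => m' (some q)) = mf := by
  induction σ generalizing m with
  | nil => cases h; exact ⟨m, .nil m, rfl⟩
  | cons t σ ih =>
    cases h with
    | cons he hs =>
      have hen : Enabled Pre m t := by
        intro p
        cases p with
        | some q => exact he q
        | none =>
          rcases Nat.eq_zero_or_pos (Pre none t) with h0 | h0
          · simp [h0]
          · exact himp m hm t h0 he
      have hm' : Reachable Pre Post m₀ (Fire Pre Post m t) :=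
        hm.trans ⟨[t], .cons hen (.nil _)⟩
      rw [← fire_proj] at hs
      obtain ⟨m', h1, h2⟩ := ih hm' hs
      exact ⟨m', .cons hen h1, h2⟩

/-- Liveness is preserved by removal of an implicit place. -/
theorem implicit_place_liveness (Pre Post : Option P → T → ℕ) (m₀ : Option P → ℕ)
    (himp : ∀ m, Reachable Pre Post m₀ m → ∀ t, 0 < Pre none t →
      (∀ q : P, Pre (some q) t ≤ m (some q)) → Pre none t ≤ m none) :
    (∀ m, Reachable Pre Post m₀ m → ∀ t : T,
      ∃ m', Reachable Pre Post m m' ∧ Enabled Pre m' t) ↔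
    (∀ m : P → ℕ,
      Reachable (fun (q : P) t => Pre (some q) t) (fun (q : P) t => Post (some q) t)
        (fun q => m₀ (some q)) m →
      ∀ t : T, ∃ m', Reachable (fun (q : P) t => Pre (some q) t)
          (fun (q : P) t => Post (some q) t) m m' ∧
        Enabled (fun (q : P) t => Pre (some q) t) m' t) := by
  constructor
  · intro hlive m ⟨σ, hσ⟩ t
    obtain ⟨m₁, h1, h2⟩ := lift_seq Pre Post m₀ himp ⟨[], .nil _⟩ hσ
    obtain ⟨m', ⟨τ, hτ⟩, hen⟩ := hlive m₁ ⟨σ, h1⟩ t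
    refine ⟨fun q => m' (some q), ⟨τ, ?_⟩, fun q => hen (some q)⟩
    rw [← h2]; exact proj_seq Pre Post hτ
  · intro hlive m hm t
    obtain ⟨mf, ⟨τ, hτ⟩, hen⟩ := hlive (fun q => m (some q))
      (hm.imp fun σ h => proj_seq Pre Post h) t
    obtain ⟨m', h1, h2⟩ := lift_seq Pre Post m₀ himp hm hτ
    have hm' : Reachable Pre Post m₀ m' := hm.trans ⟨τ, h1⟩
    refine ⟨m', ⟨τ, h1⟩, fun p => ?_⟩
    cases p with
    | some q => rw [← h2] at hen; exact hen q
    | none =>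
      rcases Nat.eq_zero_or_pos (Pre none t) with h0 | h0
      · simp [h0]
      · exact himp m' hm' t h0 (fun q => by rw [← h2] at hen; exact hen q)
end
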